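/- arXiv:2303.04762 — 3 statements merged into one kernel-verified Lean document; each statement's English description precedes it below -/
import Mathlib

section
/- In the integral sum graph G_{r,s} on vertex set {r,...,0,...,s} with r < 0 < s and n = |r|+s+1 vertices, a positive vertex i satisfies: deg(i) = n - i - 1 if 1 ≤ i ≤ ⌊s/2⌋, and deg(i) = n - i if ⌊s/2⌋ < i ≤ s. -/
/-- The integral sum graph on vertex set `{r, ..., s} ⊆ ℤ`:
distinct `u, v` are adjacent iff `u + v` also lies in `{r, ..., s}`. -/
def intervalSumGraph (r s : ℤ) : SimpleGraph ℤ where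
  Adj u v := u ≠ v ∧ u ∈ Set.Icc r s ∧ v ∈ Set.Icc r s ∧ u + v ∈ Set.Icc r s
  symm := ⟨by
    rintro u v ⟨h1, h2, h3, h4⟩
    exact ⟨h1.symm, h3, h2, by rwa [add_comm]⟩⟩
  loopless := ⟨fun u h => h.1 rfl⟩

/-- The graph `H^{-i,s}_{m,j}`: obtained from the integral sum graph `G_{-i,s}`
by deleting the vertices `-m` and `j` and all edges whose endpoint labels sum
to `-m` or to `j`. -/
def HGraph (i s m j : ℤ) : SimpleGraph ℤ where
  Adj u v := u ≠ v ∧ u ∈ Set.Icc (-i) s ∧ v ∈ Set.Icc (-i) s ∧ u + v ∈ Set.Icc (-i) s ∧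
    u ≠ -m ∧ v ≠ -m ∧ u ≠ j ∧ v ≠ j ∧ u + v ≠ -m ∧ u + v ≠ j
  symm := ⟨by
    rintro u v ⟨h1, h2, h3, h4, h5, h6, h7, h8, h9, h10⟩
    exact ⟨h1.symm, h3, h2, by rwa [add_comm], h6, h5, h8, h7,
      by rwa [add_comm], by rwa [add_comm]⟩⟩
  loopless := ⟨fun u h => h.1 rfl⟩

/-- The chromatic index of a graph: the least `n` such that there is a proper
edge coloring with `n` colors (distinct edges sharing a vertex get distinct colors). -/
noncomputable def chromaticIndex {V : Type*} (G : SimpleGraph V) : ℕ :=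
  sInf {n : ℕ | ∃ c : Sym2 V → Fin n,
    ∀ e ∈ G.edgeSet, ∀ f ∈ G.edgeSet, e ≠ f → (∃ v, v ∈ e ∧ v ∈ f) → c e ≠ c f}

/-- The sum of the two endpoint labels of an edge. -/
def edgeSum (e : Sym2 ℤ) : ℤ := Sym2.lift ⟨fun a b => a + b, fun a b => add_comm a b⟩ e

/-- The edge-sum chromatic number: the number of nonempty edge-sum color classes. -/
noncomputable def edgeSumChromatic (G : SimpleGraph ℤ) : ℕ :=
  {k : ℤ | ∃ e ∈ G.edgeSet, edgeSum e = k}.ncard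

/-!
For a vertex `0 ≤ i ≤ s` of `G_{r,s}` the constraint `r ≤ i + v` is implied by `r ≤ v`, so the
neighbours of `i` are exactly the `v ∈ [r, s - i]` other than `i` itself. That interval has
`|r| + s + 1 - i` elements, and it contains `i` precisely when `2 i ≤ s`, i.e. `i ≤ ⌊s/2⌋`.
-/

theorem Int.ncard_Icc (a b : ℤ) : (Set.Icc a b).ncard = (b + 1 - a).toNat := by
  rw [← Finset.coe_Icc, Set.ncard_coe_finset, Int.card_Icc]

namespace intervalSumGraph

variable {r s i : ℤ}

theorem neighborSet_eq (hr : r ≤ 0) (hi : 0 ≤ i) (his : i ≤ s) :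
    (intervalSumGraph r s).neighborSet i = Set.Icc r (s - i) \ {i} := by
  ext v
  simp only [SimpleGraph.mem_neighborSet, intervalSumGraph, Set.mem_Icc, Set.mem_sdiff,
    Set.mem_singleton_iff]
  omega

theorem ncard_neighborSet (hr : r ≤ 0) (hi : 0 ≤ i) (his : i ≤ s) :
    (((intervalSumGraph r s).neighborSet i).ncard : ℤ) =
      -r + s + 1 - i - if 2 * i ≤ s then 1 else 0 := by
  rw [neighborSet_eq hr hi his]
  split_ifs with hmem
  · rw [Set.ncard_sdiff_singleton_of_mem (by simp only [Set.mem_Icc]; omega), Int.ncard_Icc]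
    omega
  · rw [Set.sdiff_singleton_eq_self (by simp only [Set.mem_Icc]; omega), Int.ncard_Icc]
    omega

end intervalSumGraph

theorem degree_pos_general (r s i : ℤ) (hr : r < 0) :
    (1 ≤ i → i ≤ s / 2 →
      (((intervalSumGraph r s).neighborSet i).ncard : ℤ) = (|r| + s + 1) - i - 1) ∧
    (s / 2 < i → i ≤ s →
      (((intervalSumGraph r s).neighborSet i).ncard : ℤ) = (|r| + s + 1) - i) := by
  rw [abs_of_neg hr]
  constructor
  · intro hi hhalf
    rw [intervalSumGraph.ncard_neighborSet hr.le (by omega) (by omega), if_pos (by omega)]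
  · intro hhalf his
    rw [intervalSumGraph.ncard_neighborSet hr.le (by omega) his, if_neg (by omega)]
    ring

theorem degree_pos (r s i : ℤ) (hr : r < 0) (hs : 0 < s) :
    (1 ≤ i → i ≤ s / 2 →
      (((intervalSumGraph r s).neighborSet i).ncard : ℤ) = (|r| + s + 1) - i - 1) ∧
    (s / 2 < i → i ≤ s →
      (((intervalSumGraph r s).neighborSet i).ncard : ℤ) = (|r| + s + 1) - i) :=
  degree_pos_general r s i hr
end

section
/- If |r| + s ≥ 3 with r < 0 < s, then the number of edges of the integral sum graph G_{r,s} equals (1/4)(r² + s² - 3r + 3s - 4rs) - (1/2)(⌊|r|/2⌋ + ⌊s/2⌋). -/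
theorem SimpleGraph.ncard_edgeSet_eq_ncard_adj_lt {α : Type*} [LinearOrder α]
    (G : SimpleGraph α) : G.edgeSet.ncard = {p : α × α | p.1 < p.2 ∧ G.Adj p.1 p.2}.ncard := by
  have hImage : G.edgeSet = (fun p : α × α => s(p.1, p.2)) '' {p | p.1 < p.2 ∧ G.Adj p.1 p.2} := by
    ext e
    induction e using Sym2.ind with
    | _ u v =>
      simp only [SimpleGraph.mem_edgeSet, Set.mem_image, Set.mem_ofPred_eq, Prod.exists,
        Sym2.eq_iff]
      constructor
      · intro h
        rcases lt_or_gt_of_ne h.ne with huv | hvu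
        · exact ⟨u, v, ⟨huv, h⟩, .inl ⟨rfl, rfl⟩⟩
        · exact ⟨v, u, ⟨hvu, h.symm⟩, .inr ⟨rfl, rfl⟩⟩
      · rintro ⟨a, b, ⟨-, hab⟩, ⟨rfl, rfl⟩ | ⟨rfl, rfl⟩⟩
        exacts [hab, hab.symm]
  rw [hImage]
  refine Set.InjOn.ncard_image ?_
  rintro ⟨a, b⟩ ⟨hab, -⟩ ⟨c, d⟩ ⟨hcd, -⟩ h
  simp only [Sym2.eq_iff] at h
  rcases h with ⟨rfl, rfl⟩ | ⟨rfl, rfl⟩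
  · rfl
  · exact absurd (hab.trans hcd) (lt_irrefl _)

noncomputable def sumPairs (r s : ℤ) : Finset (ℤ × ℤ) :=
  (Finset.Icc r s ×ˢ Finset.Icc r s).filter fun p => p.1 < p.2 ∧ r ≤ p.1 + p.2 ∧ p.1 + p.2 ≤ s

theorem mem_sumPairs {r s : ℤ} {p : ℤ × ℤ} :
    p ∈ sumPairs r s ↔ r ≤ p.1 ∧ p.2 ≤ s ∧ p.1 < p.2 ∧ r ≤ p.1 + p.2 ∧ p.1 + p.2 ≤ s := by
  simp only [sumPairs, Finset.mem_filter, Finset.mem_product, Finset.mem_Icc]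
  omega

theorem ncard_edgeSet_intervalSumGraph (r s : ℤ) :
    (intervalSumGraph r s).edgeSet.ncard = (sumPairs r s).card := by
  rw [SimpleGraph.ncard_edgeSet_eq_ncard_adj_lt, ← Set.ncard_coe_finset]
  congr 1
  ext ⟨u, v⟩
  simp only [intervalSumGraph, Set.mem_Icc, Set.mem_ofPred_eq, Finset.mem_coe, mem_sumPairs]
  omega

theorem card_sumPairs_neg (r s : ℤ) : (sumPairs (-s) (-r)).card = (sumPairs r s).card := by
  refine Finset.card_nbij' (fun p => (-p.2, -p.1)) (fun p => (-p.2, -p.1)) ?_ ?_ ?_ ?_ <;>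
    intro p hp <;> simp only [Finset.mem_coe, mem_sumPairs, neg_neg] at hp ⊢ <;> omega

theorem card_sumPairs_succ_right {r s : ℤ} (hr : r ≤ 0) (hs : 0 ≤ s) :
    ((sumPairs r (s + 1)).card : ℤ) = (sumPairs r s).card + (1 - r) + s / 2 := by
  set edgesToTop := (Finset.Icc r 0).image fun u => (u, s + 1)
  set edgesSummingToTop := (Finset.Icc 1 (s / 2)).image fun u => (u, s + 1 - u)
  have hSplit : sumPairs r (s + 1) = (sumPairs r s ∪ edgesToTop) ∪ edgesSummingToTop := by
    ext ⟨u, v⟩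
    simp only [edgesToTop, edgesSummingToTop, Finset.mem_union, Finset.mem_image, Finset.mem_Icc, mem_sumPairs,
      Prod.mk.injEq]
    constructor
    · intro h
      by_cases hv : v = s + 1
      · exact .inl (.inr ⟨u, by omega⟩)
      by_cases hsum : u + v = s + 1
      · exact .inr ⟨u, by omega⟩
      · exact .inl (.inl (by omega))
    · rintro ((h | ⟨a, ha, rfl, rfl⟩) | ⟨a, ha, rfl, rfl⟩) <;> omega
  have hDisjoint₁ : Disjoint (sumPairs r s) edgesToTop := by
    simp only [edgesToTop, Finset.disjoint_left, Finset.mem_image, mem_sumPairs]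
    rintro _ h ⟨a, -, rfl⟩
    omega
  have hDisjoint₂ : Disjoint (sumPairs r s ∪ edgesToTop) edgesSummingToTop := by
    simp only [edgesToTop, edgesSummingToTop, Finset.disjoint_left, Finset.mem_union, Finset.mem_image,
      Finset.mem_Icc, mem_sumPairs]
    rintro ⟨u, v⟩ (h | ⟨b, -, hb⟩) ⟨a, ha, hab⟩ <;> simp only [Prod.mk.injEq] at * <;> omega
  have hInj : ∀ f : ℤ → ℤ, Function.Injective fun u => (u, f u) :=
    fun f _ _ h => (Prod.mk.inj h).1
  rw [hSplit, Finset.card_union_of_disjoint hDisjoint₂, Finset.card_union_of_disjoint hDisjoint₁,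
    Finset.card_image_of_injective _ (hInj _), Finset.card_image_of_injective _ (hInj _),
    Int.card_Icc, Int.card_Icc]
  omega

theorem card_sumPairs_pred_left {r s : ℤ} (hr : r ≤ 0) (hs : 0 ≤ s) :
    ((sumPairs (r - 1) s).card : ℤ) = (sumPairs r s).card + (1 + s) + -r / 2 := by
  have h := card_sumPairs_succ_right (r := -s) (s := -r) (by omega) (by omega)
  rwa [show -r + 1 = -(r - 1) by ring, card_sumPairs_neg, card_sumPairs_neg, sub_neg_eq_add] at h

theorem four_mul_card_sumPairs {r s : ℤ} (hr : r ≤ 0) (hs : 0 ≤ s) :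
    4 * ((sumPairs r s).card : ℤ) =
      r ^ 2 + s ^ 2 - 3 * r + 3 * s - 4 * r * s - 2 * (-r / 2 + s / 2) := by
  induction r, hr using Int.leInductionDown with
  | base =>
    induction s, hs using Int.leInduction with
    | base => rfl
    | succ s hs ih =>
      rw [card_sumPairs_succ_right le_rfl hs]
      have hHalf : (s + 1) / 2 + s / 2 = s := by omega
      linear_combination ih + 2 * hHalf
  | pred r hr ih =>
    rw [card_sumPairs_pred_left hr hs]
    have hHalf : -(r - 1) / 2 + -r / 2 = -r := by omega
    linear_combination ih + 2 * hHalf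

theorem edge_count_general (r s : ℤ) (hr : r < 0) (hs : 0 < s) :
    (((intervalSumGraph r s).edgeSet.ncard : ℚ)) =
      ((r : ℚ) ^ 2 + (s : ℚ) ^ 2 - 3 * r + 3 * s - 4 * r * s) / 4
        - ((((|r| / 2 : ℤ) : ℚ)) + (((s / 2 : ℤ) : ℚ))) / 2 := by
  have h : 4 * ((sumPairs r s).card : ℚ) =
      r ^ 2 + s ^ 2 - 3 * r + 3 * s - 4 * r * s - 2 * (((-r / 2 : ℤ) : ℚ) + ((s / 2 : ℤ) : ℚ)) := by
    exact_mod_cast four_mul_card_sumPairs hr.le hs.le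
  rw [ncard_edgeSet_intervalSumGraph, abs_of_neg hr]
  linarith

theorem edge_count (r s : ℤ) (hr : r < 0) (hs : 0 < s) (h3 : 3 ≤ |r| + s) :
    (((intervalSumGraph r s).edgeSet.ncard : ℚ)) =
      ((r : ℚ) ^ 2 + (s : ℚ) ^ 2 - 3 * r + 3 * s - 4 * r * s) / 4
        - ((((|r| / 2 : ℤ) : ℚ)) + (((s / 2 : ℤ) : ℚ))) / 2 :=
  edge_count_general r s hr hs
end

section
/- For every s with 3 ≤ s ≤ 8, the chromatic index of H^{-2,s}_{1,2} equals s. -/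
/-!
Colour each edge by the sum of its endpoint labels. Two distinct edges at a common vertex have
distinct sums, so this is a proper edge colouring, and the sums of the edges of
`H^{-2,s}_{1,2}` range over `{-2, 1} ∪ [3, s]`, a set of `s` labels. Conversely, vertex `0` is
adjacent to each of these `s` labels, so every proper edge colouring needs `s` colours.
-/

section EdgeColoring

variable {V : Type*} (G : SimpleGraph V)

def IsProperEdgeColoring {n : ℕ} (c : Sym2 V → Fin n) : Prop :=
  ∀ e ∈ G.edgeSet, ∀ f ∈ G.edgeSet, e ≠ f → (∃ v, v ∈ e ∧ v ∈ f) → c e ≠ c f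

def EdgeColorable (n : ℕ) : Prop :=
  ∃ c : Sym2 V → Fin n, IsProperEdgeColoring G c

variable {G}

theorem IsProperEdgeColoring.card_le {n : ℕ} {c : Sym2 V → Fin n} (hc : IsProperEdgeColoring G c)
    {v : V} {N : Finset V} (hN : ∀ w ∈ N, G.Adj v w) : N.card ≤ n := by
  simpa using Finset.card_le_card_of_injOn (fun w => c s(v, w))
    (fun w _ => Finset.mem_coe.2 (Finset.mem_univ _)) fun a ha b hb hab => by
      by_contra hne
      exact hc _ (hN a ha) _ (hN b hb) (fun h => hne (Sym2.congr_right.1 h))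
        ⟨v, Sym2.mem_mk_left _ _, Sym2.mem_mk_left _ _⟩ hab

theorem EdgeColorable.chromaticIndex_le {n : ℕ} (h : EdgeColorable G n) :
    chromaticIndex G ≤ n :=
  Nat.sInf_le h

theorem EdgeColorable.card_le_chromaticIndex {n : ℕ} (h : EdgeColorable G n) {v : V}
    {N : Finset V} (hN : ∀ w ∈ N, G.Adj v w) : N.card ≤ chromaticIndex G := by
  obtain ⟨c, hc⟩ : EdgeColorable G (chromaticIndex G) :=
    Nat.sInf_mem (s := {n | EdgeColorable G n}) ⟨n, h⟩
  exact hc.card_le hN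

end EdgeColoring

theorem eq_of_edgeSum_eq_of_mem {e f : Sym2 ℤ} {v : ℤ} (he : v ∈ e) (hf : v ∈ f)
    (h : edgeSum e = edgeSum f) : e = f := by
  induction e using Sym2.ind with | _ a b =>
  induction f using Sym2.ind with | _ c d =>
  have hsum : a + b = c + d := h
  rw [Sym2.mem_iff] at he hf
  rw [Sym2.eq_iff]
  rcases he with rfl | rfl <;> rcases hf with rfl | rfl <;> omega

theorem edgeColorable_card_of_edgeSum_mem {G : SimpleGraph ℤ} {S : Finset ℤ} (hS : S.Nonempty)
    (hsum : ∀ e ∈ G.edgeSet, edgeSum e ∈ S) : EdgeColorable G S.card := by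
  let label : ℤ → Fin S.card := fun k =>
    if hk : k ∈ S then S.equivFin ⟨k, hk⟩ else S.equivFin ⟨hS.choose, hS.choose_spec⟩
  refine ⟨fun e => label (edgeSum e), fun e he f hf hne ⟨v, hve, hvf⟩ hef => hne ?_⟩
  refine eq_of_edgeSum_eq_of_mem hve hvf ?_
  simpa [label, hsum e he, hsum f hf, Subtype.ext_iff] using hef

/- No edge has sum `0`: the candidates `{1, -1}` and `{2, -2}` each contain a deleted vertex. -/
theorem edgeSum_mem_of_mem_edgeSet_HGraph {s : ℤ} {e : Sym2 ℤ}
    (he : e ∈ (HGraph 2 s 1 2).edgeSet) :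
    edgeSum e ∈ ({-2, 1} ∪ Finset.Icc 3 s : Finset ℤ) := by
  induction e using Sym2.ind with | _ a b =>
  obtain ⟨hab, ⟨ha, -⟩, ⟨hb, -⟩, ⟨hlo, hhi⟩, ha₁, hb₁, ha₂, hb₂, h₁, h₂⟩ := he
  change a + b ∈ ({-2, 1} ∪ Finset.Icc 3 s : Finset ℤ)
  simp only [Finset.mem_union, Finset.mem_insert, Finset.mem_singleton, Finset.mem_Icc]
  omega

theorem HGraph_adj_zero_of_mem {s k : ℤ} (hs : 1 ≤ s)
    (hk : k ∈ ({-2, 1} ∪ Finset.Icc 3 s : Finset ℤ)) :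
    (HGraph 2 s 1 2).Adj 0 k := by
  simp only [Finset.mem_union, Finset.mem_insert, Finset.mem_singleton, Finset.mem_Icc] at hk
  refine ⟨?_, ⟨?_, ?_⟩, ⟨?_, ?_⟩, ⟨?_, ?_⟩, ?_, ?_, ?_, ?_, ?_, ?_⟩ <;> omega

theorem card_pair_union_Icc_three {s : ℕ} (hs : 3 ≤ s) :
    ({-2, 1} ∪ Finset.Icc 3 (s : ℤ) : Finset ℤ).card = s := by
  rw [Finset.card_union_of_disjoint, Int.card_Icc]
  · rw [Finset.card_pair (by norm_num)]
    omega
  · simp only [Finset.disjoint_left, Finset.mem_insert, Finset.mem_singleton, Finset.mem_Icc]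
    omega

theorem chromaticIndex_H_2_s_1_2_general (s : ℕ) (h3 : 3 ≤ s) :
    chromaticIndex (HGraph 2 (s : ℤ) 1 2) = s := by
  set S : Finset ℤ := {-2, 1} ∪ Finset.Icc 3 (s : ℤ)
  have hS : S.card = s := card_pair_union_Icc_three h3
  have hcol : EdgeColorable (HGraph 2 (s : ℤ) 1 2) S.card :=
    edgeColorable_card_of_edgeSum_mem ⟨1, by simp [S]⟩ fun _ => edgeSum_mem_of_mem_edgeSet_HGraph
  have hdeg : S.card ≤ chromaticIndex (HGraph 2 (s : ℤ) 1 2) :=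
    hcol.card_le_chromaticIndex fun _ => HGraph_adj_zero_of_mem (by omega)
  rw [hS] at hcol hdeg
  exact le_antisymm hcol.chromaticIndex_le hdeg

theorem chromaticIndex_H_2_s_1_2 (s : ℕ) (h3 : 3 ≤ s) (h8 : s ≤ 8) :
    chromaticIndex (HGraph 2 (s : ℤ) 1 2) = s :=
  chromaticIndex_H_2_s_1_2_general s h3
end
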